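/- arXiv:2112.14243 — 3 statements merged into one kernel-verified Lean document; each statement's English description precedes it below -/
import Mathlib

section
/- Let π be a chain on a finite set V with direct comparisons dir_π, and let ω be a strict partial order on V. Define the cycle-free part cf(π,ω) as the set of pairs (i,j) in the transitive closure of π ∪ ω such that (j,i) is not in the transitive closure of π ∪ ω. Then the transitive closure of ω ∪ cf(π,ω) is a strict partial order on V. -/
open Classical

variable {V : Type*}

/-- Transitive closure of a set of pairs (a relation). -/
def tc (R : Set (V × V)) : Set (V × V) :=
  {p | Relation.TransGen (fun a b => (a, b) ∈ R) p.1 p.2}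

/-- A strict partial order: transitive and irreflexive. -/
def IsSPO (R : Set (V × V)) : Prop :=
  (∀ a b c, (a, b) ∈ R → (b, c) ∈ R → (a, c) ∈ R) ∧ ∀ a, (a, a) ∉ R

/-- The chain determined by a duplicate-free list `l` (earlier = better):
`(i,j)` is in the chain iff `i` occurs strictly before `j` in `l`. -/
def chainSet (l : List V) : Set (V × V) := {p | [p.1, p.2].Sublist l}

/-- The direct comparisons of the chain `l`: pairs of consecutive elements. -/
def dirSet (l : List V) : Set (V × V) := {p | p ∈ l.zip l.tail}

/-- Cycle-free part of `(π ∪ ω)⁺`. -/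
def cf (l : List V) (w : Set (V × V)) : Set (V × V) :=
  {p | p ∈ tc (chainSet l ∪ w) ∧ (p.2, p.1) ∉ tc (chainSet l ∪ w)}

/-- Cyclic part of `π` with respect to `ω`: direct comparisons involved in a cycle. -/
def cyc (l : List V) (w : Set (V × V)) : Set (V × V) :=
  {p | p ∈ dirSet l ∧ (p.2, p.1) ∈ tc (chainSet l ∪ w)}

/-- A total preorder on a set `S` of comparisons. -/
def IsTotalPreorderOn (le : V × V → V × V → Prop) (S : Set (V × V)) : Prop :=
  (∀ a ∈ S, ∀ b ∈ S, ∀ c ∈ S, le a b → le b c → le a c) ∧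
    (∀ a ∈ S, ∀ b ∈ S, le a b ∨ le b a)

/-- A strict linear order on a set `S` of comparisons. -/
def IsLinearOn (lt : V × V → V × V → Prop) (S : Set (V × V)) : Prop :=
  (∀ a ∈ S, ∀ b ∈ S, ∀ c ∈ S, lt a b → lt b c → lt a c) ∧
    (∀ a ∈ S, ∀ b ∈ S, a ≠ b → lt a b ∨ lt b a) ∧ (∀ a ∈ S, ¬ lt a a)

/-- The `≤`-minimal (best) elements of `S`. -/
def minset (le : V × V → V × V → Prop) (S : Set (V × V)) : Set (V × V) :=
  {c | c ∈ S ∧ ∀ d ∈ S, le c d}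

/-- Remaining elements of `S` after peeling off the first `n` levels. -/
def rem (le : V × V → V × V → Prop) (S : Set (V × V)) : ℕ → Set (V × V)
  | 0 => S
  | n + 1 => rem le S n \ minset le (rem le S n)

/-- The `i`-th level (for `i ≥ 1`) of `S` under the total preorder `le`. -/
def level (le : V × V → V × V → Prop) (S : Set (V × V)) (i : ℕ) : Set (V × V) :=
  minset le (rem le S (i - 1))

/-- The addition operator: `addSeq le l w 0 = (ω ∪ cf(π,ω))⁺`, and step `i+1`
tries to add level `i+1` of `dir_π` intersected with `cyc(π,ω)`. -/
noncomputable def addSeq (le : V × V → V × V → Prop) (l : List V) (w : Set (V × V)) :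
    ℕ → Set (V × V)
  | 0 => tc (w ∪ cf l w)
  | i + 1 =>
    if IsSPO (tc (addSeq le l w i ∪ (minset le (rem le (dirSet l) i) ∩ cyc l w))) then
      tc (addSeq le l w i ∪ (minset le (rem le (dirSet l) i) ∩ cyc l w))
    else addSeq le l w i

/-- The fixed point of the addition operator. -/
noncomputable def addStar (le : V × V → V × V → Prop) (l : List V) (w : Set (V × V)) :
    Set (V × V) :=
  ⋃ i, addSeq le l w i

/-- The set of `π`-completions of `ω`. -/
def completions (l : List V) (w : Set (V × V)) : Set (Set (V × V)) :=
  {R | ∃ δ, δ ⊆ dirSet l ∧ R = tc (w ∪ δ) ∧ IsSPO R}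

/-- `ω₁` and `ω₂` are coordinated with respect to the chain `l`. -/
def Coordinated (l : List V) (w1 w2 : Set (V × V)) : Prop :=
  ∀ δ ⊆ cyc l w1,
    (∀ p ∈ δ, p ∉ tc (w1 ∪ w2) ∧ (p.2, p.1) ∉ tc (w1 ∪ w2)) →
    IsSPO (tc (w1 ∪ δ)) → IsSPO (tc (tc (w1 ∪ w2) ∪ δ))

/-!
Everything in `ω ∪ cf(π, ω)` lies in the transitive relation `T = (π ∪ ω)⁺`, hence so does every
path in it. A cycle of `ω ∪ cf(π, ω)` made of `ω`-edges alone is impossible since `ω` is a strict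
order; a cycle through an edge `(x, y)` of `cf(π, ω)` would give a path from `y` back to `x`,
i.e. `y = x` or `(y, x) ∈ T`, both excluded by the definition of `cf(π, ω)`.
-/

open Relation

section Relation

variable {α : Type*} {r s : α → α → Prop}

theorem Relation.TransGen.left_or_exists_right {a b : α}
    (h : TransGen (fun x y => r x y ∨ s x y) a b) :
    TransGen r a b ∨ ∃ x y, s x y ∧ ReflTransGen (fun x y => r x y ∨ s x y) a x ∧
      ReflTransGen (fun x y => r x y ∨ s x y) y b := by
  induction h with
  | single hab =>
    rcases hab with hr | hs
    · exact .inl (.single hr)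
    · exact .inr ⟨_, _, hs, .refl, .refl⟩
  | tail hab hbc ih =>
    rcases hbc with hr | hs
    · rcases ih with ih | ⟨x, y, hxy, hax, hyb⟩
      · exact .inl (ih.tail hr)
      · exact .inr ⟨x, y, hxy, hax, hyb.tail (.inl hr)⟩
    · exact .inr ⟨_, _, hs, hab.to_reflTransGen, .refl⟩

theorem not_transGen_or_self (hr_trans : ∀ a b c, r a b → r b c → r a c)
    (hr_irrefl : ∀ a, ¬ r a a) (hs : ∀ x y, s x y → ¬ ReflTransGen (fun a b => r a b ∨ s a b) y x)
    (a : α) : ¬ TransGen (fun a b => r a b ∨ s a b) a a := by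
  intro ha
  rcases ha.left_or_exists_right with hr | ⟨x, y, hxy, hax, hya⟩
  · have : IsTrans α r := ⟨hr_trans⟩
    exact hr_irrefl a (transGen_eq_self (r := r) ▸ hr)
  · exact hs x y hxy (hya.trans hax)

end Relation

theorem isSPO_tc_of_irreflexive {R : Set (V × V)} (h : ∀ a, (a, a) ∉ tc R) : IsSPO (tc R) :=
  ⟨fun _ _ _ hab hbc => TransGen.trans hab hbc, h⟩

theorem tc_union_cf_subset (l : List V) (w : Set (V × V)) :
    tc (w ∪ cf l w) ⊆ tc (chainSet l ∪ w) := fun _ hp =>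
  TransGen.closed (fun _ _ hab => hab.elim (fun hw => .single (.inr hw)) (·.1)) _ _ hp

theorem not_reflTransGen_of_mem_cf {l : List V} {w : Set (V × V)} {x y : V}
    (hxy : (x, y) ∈ cf l w) : ¬ ReflTransGen (fun a b => (a, b) ∈ w ∪ cf l w) y x := by
  intro hyx
  rcases reflTransGen_iff_eq_or_transGen.mp hyx with rfl | hyx
  · exact hxy.2 hxy.1
  · exact hxy.2 (tc_union_cf_subset l w hyx)

theorem stmt3_general {V : Type*} (l : List V)
    (w : Set (V × V)) (hw : IsSPO w) :
    IsSPO (tc (w ∪ cf l w)) :=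
  isSPO_tc_of_irreflexive <|
    not_transGen_or_self hw.1 hw.2 fun _ _ => not_reflTransGen_of_mem_cf

theorem stmt3 {V : Type*} [Fintype V] (l : List V) (hl : l.Nodup)
    (w : Set (V × V)) (hw : IsSPO w) :
    IsSPO (tc (w ∪ cf l w)) :=
  stmt3_general l w hw
end

section
/- There exist a chain π on a 4-element set, strict partial orders ω1, ω2 with (ω1 ∪ ω2)^+ a strict partial order, and a total preorder ≤_π on dir_π, such that ω1 and ω2 are not coordinated with respect to π and the induced revision operator violates postulate P3, i.e., add^*_{≤_π}((ω1∪ω2)^+) ⊄ (add^*_{≤_π}(ω1) ∪ ω2)^+. Concretely: V = {1,2,3,4}, π the chain 1 > 2 > 3 > 4, ω1 = {(4,1)}, ω2 = {(3,1)}, and ≤_π ranking (1,2) < (2,3) < (3,4): then (3,4) ∈ add^*_{≤_π}((ω1∪ω2)^+) but (3,4) ∉ (add^*_{≤_π}(ω1) ∪ ω2)^+. -/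
open Classical

variable {V : Type*}

/-!
Relabel the paper's `1, 2, 3, 4` as `0, 1, 2, 3`. Since `(3,0)` closes a cycle through the whole
chain `0 > 1 > 2 > 3`, for both `ω₁ = {(3,0)}` and `(ω₁ ∪ ω₂)⁺ = {(3,0),(2,0)}` the cycle-free part
is empty, every direct comparison is cyclic, and the levels of `≤_π` are `(0,1)`, `(1,2)`, `(2,3)`.
From `ω₁` the operator adds `(0,1)` and `(1,2)`, stays inside the linear order `3 > 0 > 1 > 2`,
and must reject `(2,3)`; no pair of that order or of `ω₂` ends in `3`, so `(2,3)` is missing from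
`(add*(ω₁) ∪ ω₂)⁺`. From `{(3,0),(2,0)}` it adds `(0,1)`, rejects `(1,2)` because of `2 > 0 > 1`,
and can then add `(2,3)`, staying inside `2 > 3 > 0 > 1`. The same `δ = {(0,1),(1,2)}` shows that
`ω₁` and `ω₂` are not coordinated: `ω₁ ∪ δ` lies in `3 > 0 > 1 > 2`, while with `ω₂` it closes
the cycle `0 > 1 > 2 > 0`.
-/

section TransitiveClosure

variable {R S : Set (V × V)}

theorem subset_tc : R ⊆ tc R := fun _ h => Relation.TransGen.single h

theorem tc_trans {a b c : V} (hab : (a, b) ∈ tc R) (hbc : (b, c) ∈ tc R) : (a, c) ∈ tc R :=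
  Relation.TransGen.trans hab hbc

theorem tc_subset (hRS : R ⊆ S) (hS : ∀ a b c, (a, b) ∈ S → (b, c) ∈ S → (a, c) ∈ S) :
    tc R ⊆ S := by
  rintro ⟨a, b⟩ (h : Relation.TransGen _ a b)
  induction h with
  | single h => exact hRS h
  | tail _ h ih => exact hS _ _ _ ih (hRS h)

theorem tc_eq_self (hR : ∀ a b c, (a, b) ∈ R → (b, c) ∈ R → (a, c) ∈ R) : tc R = R :=
  (tc_subset subset_rfl hR).antisymm subset_tc

theorem tc_tc : tc (tc R) = tc R :=
  tc_eq_self fun _ _ _ => tc_trans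

theorem IsSPO.tc_of_subset (hS : IsSPO S) (hRS : R ⊆ S) : IsSPO (tc R) :=
  ⟨fun _ _ _ => tc_trans, fun a ha => hS.2 a (tc_subset hRS hS.1 ha)⟩

theorem not_isSPO_tc_union_singleton {a b : V} (h : (b, a) ∈ R) :
    ¬ IsSPO (tc (R ∪ {(a, b)})) :=
  fun hS => hS.2 a (tc_trans (subset_tc (Or.inr rfl)) (subset_tc (Or.inl h)))

theorem snd_ne_of_mem_tc {b : V} (hR : ∀ p ∈ R, p.2 ≠ b) {p : V × V} (hp : p ∈ tc R) :
    p.2 ≠ b := by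
  obtain ⟨a, c⟩ := p
  change Relation.TransGen _ a c at hp
  induction hp with
  | single h => exact hR _ h
  | @tail x y _ hxy _ => exact hR (x, y) hxy

end TransitiveClosure

theorem mem_chainSet {l : List V} {p : V × V} : p ∈ chainSet l ↔ [p.1, p.2].Sublist l :=
  Iff.rfl

theorem mem_dirSet {l : List V} {p : V × V} : p ∈ dirSet l ↔ p ∈ l.zip l.tail :=
  Iff.rfl

section Levels

variable (le : V × V → V × V → Prop)

theorem rem_succ (S : Set (V × V)) (n : ℕ) :
    rem le S (n + 1) = rem le S n \ minset le (rem le S n) := rfl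

theorem minset_insert_eq_singleton {a : V × V} {S : Set (V × V)} (ha : le a a)
    (hS : ∀ d ∈ S, le a d ∧ ¬ le d a) : minset le (insert a S) = {a} := by
  ext c
  constructor
  · rintro ⟨rfl | hc, hc_le⟩
    · rfl
    · exact absurd (hc_le a (Set.mem_insert a S)) (hS c hc).2
  · rintro rfl
    exact ⟨Set.mem_insert c S, by rintro d (rfl | hd); exacts [ha, (hS d hd).1]⟩

theorem insert_diff_minset {a : V × V} {S : Set (V × V)} (ha : le a a)
    (hS : ∀ d ∈ S, le a d ∧ ¬ le d a) : insert a S \ minset le (insert a S) = S := by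
  rw [minset_insert_eq_singleton le ha hS, Set.insert_sdiff_self_of_notMem]
  exact fun haS => (hS a haS).2 ha

theorem rem_eq_empty_of_le {S : Set (V × V)} {m n : ℕ} (hmn : m ≤ n) (hm : rem le S m = ∅) :
    rem le S n = ∅ := by
  induction hmn with
  | refl => exact hm
  | step _ ih => exact Set.subset_eq_empty Set.sdiff_subset ih

theorem level_subset {S : Set (V × V)} (i : ℕ) : level le S i ⊆ S := by
  intro p hp
  obtain ⟨hp, -⟩ := hp
  generalize i - 1 = n at hp
  induction n with
  | zero => exact hp
  | succ n ih => exact ih hp.1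

end Levels

section AddOperator

variable (le : V × V → V × V → Prop) (l : List V) (w : Set (V × V))

theorem cf_eq_empty_of_tc_eq_univ (h : tc (chainSet l ∪ w) = Set.univ) : cf l w = ∅ := by
  ext p
  simp [cf, h]

theorem cyc_eq_dirSet_of_tc_eq_univ (h : tc (chainSet l ∪ w) = Set.univ) :
    cyc l w = dirSet l := by
  ext p
  simp [cyc, h]

theorem addSeq_succ_of_cyc_eq_dirSet (hcyc : cyc l w = dirSet l) (i : ℕ) :
    addSeq le l w (i + 1) =
      if IsSPO (tc (addSeq le l w i ∪ level le (dirSet l) (i + 1))) then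
        tc (addSeq le l w i ∪ level le (dirSet l) (i + 1))
      else addSeq le l w i := by
  have hlevel : minset le (rem le (dirSet l) i) ⊆ dirSet l := level_subset le (i + 1)
  rw [addSeq, hcyc, Set.inter_eq_left.2 hlevel]
  rfl

theorem tc_addSeq (i : ℕ) : tc (addSeq le l w i) = addSeq le l w i := by
  cases i with
  | zero => exact tc_tc
  | succ i =>
    rw [addSeq]
    split_ifs
    · exact tc_tc
    · exact tc_addSeq i

theorem addSeq_mono : Monotone (addSeq le l w) := by
  refine monotone_nat_of_le_succ fun i => ?_
  rw [addSeq]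
  split_ifs
  · exact Set.subset_union_left.trans subset_tc
  · exact subset_rfl

theorem addSeq_succ_of_rem_eq_empty {i : ℕ} (h : rem le (dirSet l) i = ∅) :
    addSeq le l w (i + 1) = addSeq le l w i := by
  have hmin : minset le (∅ : Set (V × V)) = ∅ := Set.eq_empty_of_forall_notMem fun _ h => h.1
  rw [addSeq, h, hmin, Set.empty_inter, Set.union_empty, tc_addSeq, ite_self]

theorem addStar_eq_addSeq_of_rem_eq_empty {n : ℕ} (h : rem le (dirSet l) n = ∅) :
    addStar le l w = addSeq le l w n := by
  refine (Set.iUnion_subset fun i => ?_).antisymm (Set.subset_iUnion _ n)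
  rcases le_total i n with hin | hni
  · exact addSeq_mono le l w hin
  · induction hni with
    | refl => exact subset_rfl
    | step hnm ih =>
      rw [addSeq_succ_of_rem_eq_empty le l w (rem_eq_empty_of_le le hnm h)]
      exact ih

end AddOperator

local notation "π₄" => ([0, 1, 2, 3] : List (Fin 4))
local notation "fstLE" => fun (c d : Fin 4 × Fin 4) => Prod.fst c ≤ Prod.fst d
local notation "ω₁" => ({((3 : Fin 4), (0 : Fin 4))} : Set (Fin 4 × Fin 4))
local notation "ω₂" => ({((2 : Fin 4), (0 : Fin 4))} : Set (Fin 4 × Fin 4))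

theorem dirSet_π₄ : dirSet π₄ = {(0, 1), (1, 2), (2, 3)} := by
  ext ⟨a, b⟩
  rw [mem_dirSet]
  revert a b
  decide

theorem tc_chainSet_π₄_union_eq_univ {w : Set (Fin 4 × Fin 4)} (hw : (3, 0) ∈ w) :
    tc (chainSet π₄ ∪ w) = Set.univ := by
  have hchain : ∀ a b : Fin 4, a < b → (a, b) ∈ chainSet π₄ := by
    simp only [mem_chainSet]; decide
  refine Set.eq_univ_of_forall fun ⟨a, b⟩ => ?_
  have to_three : Relation.ReflTransGen (fun x y => (x, y) ∈ chainSet π₄ ∪ w) a 3 := by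
    rcases (Fin.le_last a).lt_or_eq with h | h
    · exact .single (Or.inl (hchain a 3 h))
    · rw [h]; rfl
  have from_zero : Relation.ReflTransGen (fun x y => (x, y) ∈ chainSet π₄ ∪ w) 0 b := by
    rcases (Fin.zero_le b).lt_or_eq with h | h
    · exact .single (Or.inl (hchain 0 b h))
    · rw [← h]
  exact Relation.TransGen.trans_left (Relation.TransGen.tail' to_three (Or.inr hw)) from_zero

theorem cyc_π₄_eq_dirSet {w : Set (Fin 4 × Fin 4)} (hw : (3, 0) ∈ w) : cyc π₄ w = dirSet π₄ :=
  cyc_eq_dirSet_of_tc_eq_univ _ _ (tc_chainSet_π₄_union_eq_univ hw)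

theorem addSeq_π₄_zero {le : Fin 4 × Fin 4 → Fin 4 × Fin 4 → Prop} {w : Set (Fin 4 × Fin 4)}
    (hw : (3, 0) ∈ w) : addSeq le π₄ w 0 = tc w := by
  rw [addSeq, cf_eq_empty_of_tc_eq_univ _ _ (tc_chainSet_π₄_union_eq_univ hw), Set.union_empty]

theorem rem_one : rem fstLE (dirSet π₄) 1 = {(1, 2), (2, 3)} := by
  rw [rem_succ, rem, dirSet_π₄]
  exact insert_diff_minset _ le_rfl (by decide)

theorem rem_two : rem fstLE (dirSet π₄) 2 = {(2, 3)} := by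
  rw [rem_succ, rem_one]
  exact insert_diff_minset _ le_rfl (by decide)

theorem rem_three : rem fstLE (dirSet π₄) 3 = ∅ := by
  rw [rem_succ, rem_two]
  simpa using insert_diff_minset (S := ∅) _ (le_refl (2 : Fin 4)) (by simp)

theorem level_one : level fstLE (dirSet π₄) 1 = {(0, 1)} := by
  unfold level
  rw [rem, dirSet_π₄]
  exact minset_insert_eq_singleton _ le_rfl (by decide)

theorem level_two : level fstLE (dirSet π₄) 2 = {(1, 2)} := by
  unfold level
  rw [Nat.add_one_sub_one, rem_one]
  exact minset_insert_eq_singleton _ le_rfl (by decide)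

theorem level_three : level fstLE (dirSet π₄) 3 = {(2, 3)} := by
  unfold level
  rw [Nat.add_one_sub_one, rem_two]
  simpa using minset_insert_eq_singleton (S := ∅) _ (le_refl (2 : Fin 4)) (by simp)

theorem isSPO_chainSet_3012 : IsSPO (chainSet [3, 0, 1, 2] : Set (Fin 4 × Fin 4)) := by
  simp only [IsSPO, mem_chainSet]; decide

theorem isSPO_chainSet_2301 : IsSPO (chainSet [2, 3, 0, 1] : Set (Fin 4 × Fin 4)) := by
  simp only [IsSPO, mem_chainSet]; decide

theorem tc_ω₁_union_ω₂ : tc (ω₁ ∪ ω₂) = {(3, 0), (2, 0)} := by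
  rw [Set.singleton_union]
  exact tc_eq_self (by decide)

theorem tc_ω₁_extension_subset :
    tc (tc (ω₁ ∪ {(0, 1)}) ∪ {(1, 2)}) ⊆ chainSet [3, 0, 1, 2] := by
  have htrans := isSPO_chainSet_3012.1
  refine tc_subset (Set.union_subset (tc_subset ?_ htrans) ?_) htrans <;>
    simp [Set.insert_subset_iff, mem_chainSet]

theorem addSeq_ω₁_two :
    addSeq fstLE π₄ ω₁ 2 = tc (tc (ω₁ ∪ {(0, 1)}) ∪ {(1, 2)}) := by
  have hcyc := cyc_π₄_eq_dirSet (w := ω₁) rfl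
  have hspo₂ := isSPO_chainSet_3012.tc_of_subset (subset_tc.trans tc_ω₁_extension_subset)
  have hspo₁ : IsSPO (tc (ω₁ ∪ {(0, 1)})) := isSPO_chainSet_3012.tc_of_subset <|
    subset_tc.trans <| Set.subset_union_left.trans <| subset_tc.trans tc_ω₁_extension_subset
  rw [addSeq_succ_of_cyc_eq_dirSet _ _ _ hcyc, level_two, addSeq_succ_of_cyc_eq_dirSet _ _ _ hcyc,
    level_one, addSeq_π₄_zero (w := ω₁) rfl, tc_eq_self (R := ω₁) (by decide), if_pos hspo₁,
    if_pos hspo₂]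

theorem addStar_ω₁_subset : addStar fstLE π₄ ω₁ ⊆ chainSet [3, 0, 1, 2] := by
  have hcyc := cyc_π₄_eq_dirSet (w := ω₁) rfl
  have h32 : ((3 : Fin 4), (2 : Fin 4)) ∈ addSeq fstLE π₄ ω₁ 2 := by
    rw [addSeq_ω₁_two]
    exact tc_trans (subset_tc (Or.inl (tc_trans (subset_tc (Or.inl rfl)) (subset_tc (Or.inr rfl)))))
      (subset_tc (Or.inr rfl))
  rw [addStar_eq_addSeq_of_rem_eq_empty _ _ _ rem_three, addSeq_succ_of_cyc_eq_dirSet _ _ _ hcyc,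
    level_three, if_neg (not_isSPO_tc_union_singleton h32), addSeq_ω₁_two]
  exact tc_ω₁_extension_subset

theorem tc_ω₁₂_extension_subset :
    tc (tc ({(3, 0), (2, 0)} ∪ {(0, 1)}) ∪ {(2, 3)}) ⊆
      (chainSet [2, 3, 0, 1] : Set (Fin 4 × Fin 4)) := by
  have htrans := isSPO_chainSet_2301.1
  refine tc_subset (Set.union_subset (tc_subset ?_ htrans) ?_) htrans <;>
    simp [Set.insert_subset_iff, mem_chainSet]

theorem addSeq_ω₁₂_three :
    addSeq fstLE π₄ {(3, 0), (2, 0)} 3 = tc (tc ({(3, 0), (2, 0)} ∪ {(0, 1)}) ∪ {(2, 3)}) := by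
  have hcyc := cyc_π₄_eq_dirSet (w := {(3, 0), (2, 0)}) (Or.inl rfl)
  have hspo₃ := isSPO_chainSet_2301.tc_of_subset (subset_tc.trans tc_ω₁₂_extension_subset)
  have hspo₁ : IsSPO (tc ({(3, 0), (2, 0)} ∪ {((0 : Fin 4), (1 : Fin 4))})) :=
    isSPO_chainSet_2301.tc_of_subset <|
      subset_tc.trans <| Set.subset_union_left.trans <| subset_tc.trans tc_ω₁₂_extension_subset
  have h21 : ((2 : Fin 4), (1 : Fin 4)) ∈ tc ({(3, 0), (2, 0)} ∪ {(0, 1)}) :=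
    tc_trans (subset_tc (Or.inl (Or.inr rfl))) (subset_tc (Or.inr rfl))
  rw [addSeq_succ_of_cyc_eq_dirSet _ _ _ hcyc, level_three, addSeq_succ_of_cyc_eq_dirSet _ _ _ hcyc,
    level_two, addSeq_succ_of_cyc_eq_dirSet _ _ _ hcyc, level_one, addSeq_π₄_zero (Or.inl rfl),
    tc_eq_self (R := {(3, 0), (2, 0)}) (by decide), if_pos hspo₁,
    if_neg (not_isSPO_tc_union_singleton h21), if_pos hspo₃]

theorem mem_addStar_tc_ω₁_union_ω₂ :
    ((2 : Fin 4), (3 : Fin 4)) ∈ addStar fstLE π₄ (tc (ω₁ ∪ ω₂)) := by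
  rw [tc_ω₁_union_ω₂]
  exact Set.mem_iUnion.2 ⟨3, addSeq_ω₁₂_three ▸ subset_tc (Or.inr rfl)⟩

theorem notMem_tc_addStar_ω₁_union_ω₂ :
    ((2 : Fin 4), (3 : Fin 4)) ∉ tc (addStar fstLE π₄ ω₁ ∪ ω₂) := by
  have hchain : ∀ p ∈ (chainSet [3, 0, 1, 2] : Set (Fin 4 × Fin 4)), p.2 ≠ 3 := by
    simp only [mem_chainSet]; decide
  refine fun h => snd_ne_of_mem_tc ?_ h rfl
  rintro p (hp | rfl)
  · exact hchain p (addStar_ω₁_subset hp)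
  · decide

theorem not_coordinated_ω₁_ω₂ : ¬ Coordinated π₄ ω₁ ω₂ := by
  intro h
  have hδ : {(0, 1), (1, 2)} ⊆ cyc π₄ ω₁ := by
    rw [cyc_π₄_eq_dirSet (w := ω₁) rfl, dirSet_π₄]
    exact Set.insert_subset_insert (Set.singleton_subset_iff.2 (Or.inl rfl))
  have hspo : IsSPO (tc (ω₁ ∪ {(0, 1), (1, 2)})) :=
    isSPO_chainSet_3012.tc_of_subset (by simp [Set.insert_subset_iff, mem_chainSet])
  have hcycle := h _ hδ (by rw [tc_ω₁_union_ω₂]; decide) hspo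
  rw [tc_ω₁_union_ω₂] at hcycle
  exact hcycle.2 0 (tc_trans (tc_trans (subset_tc (Or.inr (Or.inl rfl)))
    (subset_tc (Or.inr (Or.inr rfl)))) (subset_tc (Or.inl (Or.inr rfl))))

theorem stmt11 :
    ∃ (l : List (Fin 4)) (w1 w2 : Set (Fin 4 × Fin 4))
      (le : Fin 4 × Fin 4 → Fin 4 × Fin 4 → Prop),
      l = [0, 1, 2, 3] ∧ w1 = {((3 : Fin 4), (0 : Fin 4))} ∧
      w2 = {((2 : Fin 4), (0 : Fin 4))} ∧
      le = (fun c d => c.1 ≤ d.1) ∧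
      l.Nodup ∧ IsSPO w1 ∧ IsSPO w2 ∧ IsSPO (tc (w1 ∪ w2)) ∧
      IsTotalPreorderOn le (dirSet l) ∧
      ¬ Coordinated l w1 w2 ∧
      ¬ addStar le l (tc (w1 ∪ w2)) ⊆ tc (addStar le l w1 ∪ w2) ∧
      ((2 : Fin 4), (3 : Fin 4)) ∈ addStar le l (tc (w1 ∪ w2)) ∧
      ((2 : Fin 4), (3 : Fin 4)) ∉ tc (addStar le l w1 ∪ w2) := by
  refine ⟨π₄, ω₁, ω₂, fstLE, rfl, rfl, rfl, rfl, by decide, by unfold IsSPO; decide,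
    by unfold IsSPO; decide, ?_, ?_, not_coordinated_ω₁_ω₂,
    fun hsub => notMem_tc_addStar_ω₁_union_ω₂ (hsub mem_addStar_tc_ω₁_union_ω₂),
    mem_addStar_tc_ω₁_union_ω₂, notMem_tc_addStar_ω₁_union_ω₂⟩
  · rw [tc_ω₁_union_ω₂]
    unfold IsSPO
    decide
  · exact ⟨fun _ _ _ _ _ _ => le_trans, fun a _ b _ => le_total a.1 b.1⟩
end

section
/- Let π be a chain on finite V, ω a strict partial order, and ≤_π, ≤'_π two total preorders on dir_π that agree on cyc(π,ω) (i.e., induce the same restriction of the level structure to cyc(π,ω)). Then add^*_{≤_π}(ω) = add^*_{≤'_π}(ω): the revision result depends only on the ordering of the direct comparisons involved in a cycle with ω. -/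
open Classical

variable {V : Type*}

section StmtAux

variable {V : Type*}

/-! ### Auxiliary lemmas -/

lemma my_subset_tc (R : Set (V × V)) : R ⊆ tc R := fun p hp => Relation.TransGen.single hp

lemma my_tc_idem (R : Set (V × V)) : tc (tc R) = tc R := by
  have : (fun a b : V => (a, b) ∈ tc R) = Relation.TransGen (fun a b => (a, b) ∈ R) := rfl
  ext p
  show Relation.TransGen _ _ _ ↔ Relation.TransGen _ _ _
  rw [this, Relation.transGen_idem]

/-- The one-step operator. -/
noncomputable def stp (B X : Set (V × V)) : Set (V × V) :=
  if IsSPO (tc (B ∪ X)) then tc (B ∪ X) else B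

lemma stp_subset (B X : Set (V × V)) : B ⊆ stp B X := by
  unfold stp
  split
  · exact fun p hp => Relation.TransGen.single (Or.inl hp)
  · exact subset_rfl

lemma stp_closed {B : Set (V × V)} (h : tc B = B) (X : Set (V × V)) : tc (stp B X) = stp B X := by
  unfold stp
  split
  · exact my_tc_idem _
  · exact h

lemma stp_empty {B : Set (V × V)} (h : tc B = B) : stp B ∅ = B := by
  unfold stp
  rw [Set.union_empty, h]
  split <;> rfl

lemma addSeq_succ (le : V × V → V × V → Prop) (l : List V) (w : Set (V × V)) (i : ℕ) :
    addSeq le l w (i + 1) = stp (addSeq le l w i) (minset le (rem le (dirSet l) i) ∩ cyc l w) :=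
  rfl

lemma addSeq_closed (le : V × V → V × V → Prop) (l : List V) (w : Set (V × V)) (i : ℕ) :
    tc (addSeq le l w i) = addSeq le l w i := by
  induction i with
  | zero => exact my_tc_idem _
  | succ n ih => rw [addSeq_succ]; exact stp_closed ih _

lemma addSeq_eq_foldl (le : V × V → V × V → Prop) (l : List V) (w : Set (V × V)) (n : ℕ) :
    addSeq le l w n = List.foldl stp (tc (w ∪ cf l w))
      ((List.range n).map (fun i => minset le (rem le (dirSet l) i) ∩ cyc l w)) := by
  induction n with
  | zero => rfl
  | succ n ih =>
      rw [addSeq_succ, ih, List.range_succ, List.map_append, List.foldl_append]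
      rfl

lemma foldl_filter (B : Set (V × V)) (hB : tc B = B) (L : List (Set (V × V))) :
    List.foldl stp B L = List.foldl stp B (L.filter (fun X => X ≠ ∅)) := by
  induction L generalizing B with
  | nil => rfl
  | cons X L ih =>
      by_cases h : X = ∅
      · subst h
        rw [List.foldl_cons, stp_empty hB, ih B hB]
        congr 1
        simp [List.filter_cons]
      · have hf : (X :: L).filter (fun Y => Y ≠ ∅) = X :: L.filter (fun Y => Y ≠ ∅) := by
          simp [List.filter_cons, h]
        rw [hf, List.foldl_cons, List.foldl_cons]
        exact ih _ (stp_closed hB X)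

lemma addSeq_mono_s17 (le : V × V → V × V → Prop) (l : List V) (w : Set (V × V)) {i j : ℕ}
    (h : i ≤ j) : addSeq le l w i ⊆ addSeq le l w j := by
  induction j with
  | zero => simp_all
  | succ n ih =>
      rcases Nat.lt_or_ge i (n+1) with h' | h'
      · exact (ih (Nat.lt_succ_iff.mp h')).trans (by rw [addSeq_succ]; exact stp_subset _ _)
      · have : i = n + 1 := le_antisymm h h'
        simp [this]

/-! ### minset / rem lemmas -/

lemma minset_subset (le : V × V → V × V → Prop) (S : Set (V × V)) : minset le S ⊆ S :=
  fun _ h => h.1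

lemma minset_empty (le : V × V → V × V → Prop) : minset le (∅ : Set (V × V)) = ∅ := by
  ext c; simp [minset]

lemma tpo_mono {le : V × V → V × V → Prop} {S S' : Set (V × V)}
    (h : IsTotalPreorderOn le S) (hs : S' ⊆ S) : IsTotalPreorderOn le S' :=
  ⟨fun a ha b hb c hc => h.1 a (hs ha) b (hs hb) c (hs hc),
   fun a ha b hb => h.2 a (hs ha) b (hs hb)⟩

lemma rem_subset (le : V × V → V × V → Prop) (S : Set (V × V)) (n : ℕ) :
    rem le S n ⊆ S := by
  induction n with
  | zero => exact subset_rfl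
  | succ n ih => exact (Set.diff_subset).trans ih

lemma rem_mono_set {le : V × V → V × V → Prop} {T S : Set (V × V)} (h : T ⊆ S) (n : ℕ) :
    rem le T n ⊆ rem le S n := by
  induction n with
  | zero => exact h
  | succ n ih =>
      intro c hc
      refine ⟨ih hc.1, fun hmin => hc.2 ⟨hc.1, fun d hd => hmin.2 d (ih hd)⟩⟩

lemma rem_shift (le : V × V → V × V → Prop) (S : Set (V × V)) (i : ℕ) :
    rem le S (i + 1) = rem le (S \ minset le S) i := by
  induction i with
  | zero => rfl
  | succ n ih => show rem le S (n+1) \ _ = _; rw [ih]; rfl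

lemma rem_antitone (le : V × V → V × V → Prop) (S : Set (V × V)) {m n : ℕ} (h : m ≤ n) :
    rem le S n ⊆ rem le S m := by
  induction n with
  | zero => simp_all
  | succ n ih =>
      rcases Nat.lt_or_ge m (n+1) with h' | h'
      · exact (Set.diff_subset).trans (ih (Nat.lt_succ_iff.mp h'))
      · have : m = n + 1 := le_antisymm h h'
        simp [this]

lemma finset_min {le : V × V → V × V → Prop} {S : Set (V × V)}
    (hle : IsTotalPreorderOn le S) :
    ∀ u : Finset (V × V), (u : Set (V × V)) ⊆ S → u.Nonempty →
      ∃ m ∈ u, ∀ d ∈ u, le m d := by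
  intro u
  induction u using Finset.induction_on with
  | empty => intro _ h; simp at h
  | @insert a u ha ih =>
      intro hU _
      have haS : a ∈ S := hU (by simp)
      have hUS : (u : Set (V × V)) ⊆ S := fun x hx => hU (by simp; right; exact_mod_cast hx)
      by_cases hu : u.Nonempty
      · obtain ⟨m, hm, hmmin⟩ := ih hUS hu
        have hmS : m ∈ S := hUS hm
        rcases hle.2 a haS m hmS with h | h
        · refine ⟨a, by simp, ?_⟩
          intro d hd
          rcases Finset.mem_insert.mp hd with rfl | hd
          · exact (hle.2 _ haS _ haS).elim id id
          · exact hle.1 a haS m hmS d (hUS hd) h (hmmin d hd)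
        · refine ⟨m, by simp [hm], ?_⟩
          intro d hd
          rcases Finset.mem_insert.mp hd with rfl | hd
          · exact h
          · exact hmmin d hd
      · rw [Finset.not_nonempty_iff_eq_empty] at hu
        subst hu
        refine ⟨a, by simp, ?_⟩
        intro d hd
        simp at hd
        subst hd
        exact (hle.2 _ haS _ haS).elim id id

lemma minset_nonempty {le : V × V → V × V → Prop} {S U : Set (V × V)}
    (hle : IsTotalPreorderOn le S) (hU : U ⊆ S) (hfin : U.Finite) (hne : U.Nonempty) :
    (minset le U).Nonempty := by
  obtain ⟨m, hm, hmmin⟩ := finset_min hle hfin.toFinset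
    (by rw [hfin.coe_toFinset]; exact hU)
    (by rw [← Finset.coe_nonempty, hfin.coe_toFinset]; exact hne)
  refine ⟨m, hfin.mem_toFinset.mp hm, fun d hd => hmmin d (hfin.mem_toFinset.mpr hd)⟩

lemma rem_eventually_empty {le : V × V → V × V → Prop} {S : Set (V × V)}
    (hle : IsTotalPreorderOn le S) (hfin : S.Finite) :
    rem le S S.ncard = ∅ := by
  have key : ∀ n : ℕ, rem le S n = ∅ ∨ (rem le S n).ncard + n ≤ S.ncard := by
    intro n
    induction n with
    | zero => right; show S.ncard + 0 ≤ S.ncard; omega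
    | succ n ih =>
        rcases ih with h | h
        · left
          have : rem le S (n+1) ⊆ rem le S n := Set.diff_subset
          rw [h] at this
          exact Set.subset_empty_iff.mp this
        · by_cases hne : rem le S n = ∅
          · left
            have : rem le S (n+1) ⊆ rem le S n := Set.diff_subset
            rw [hne] at this
            exact Set.subset_empty_iff.mp this
          · right
            have hne' : (rem le S n).Nonempty := Set.nonempty_iff_ne_empty.mpr hne
            obtain ⟨m, hm⟩ := minset_nonempty hle (rem_subset le S n)
              (hfin.subset (rem_subset le S n)) hne'
            have hss : rem le S (n+1) ⊂ rem le S n := by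
              refine ⟨Set.diff_subset, fun hsub => ?_⟩
              have : m ∈ rem le S (n+1) := hsub hm.1
              exact this.2 hm
            have := Set.ncard_lt_ncard hss (hfin.subset (rem_subset le S n))
            omega
  rcases key S.ncard with h | h
  · exact h
  · have hfin' : (rem le S S.ncard).Finite := hfin.subset (rem_subset le S _)
    have : (rem le S S.ncard).ncard = 0 := by omega
    exact (Set.ncard_eq_zero hfin').mp this

/-! ### The main combinatorial lemma -/

lemma level_filter_eq (le : V × V → V × V → Prop) :
    ∀ (n : ℕ) (S T : Set (V × V)), IsTotalPreorderOn le S → T ⊆ S → rem le S n = ∅ →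
    ((List.range n).map (fun i => minset le (rem le S i) ∩ T)).filter (fun X => X ≠ ∅) =
    ((List.range n).map (fun i => minset le (rem le T i))).filter (fun X => X ≠ ∅) := by
  intro n
  induction n with
  | zero => intro S T _ _ _; rfl
  | succ n ih =>
      intro S T hle hTS hSn
      set S' : Set (V × V) := S \ minset le S with hS'
      have hS'sub : S' ⊆ S := Set.diff_subset
      have hS'n : rem le S' n = ∅ := by rw [← rem_shift]; exact hSn
      by_cases h : minset le S ∩ T = ∅
      · -- head of LHS is empty; T ⊆ S'
        have hTS' : T ⊆ S' := by
          intro x hx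
          refine ⟨hTS hx, fun hmin => ?_⟩
          have : x ∈ minset le S ∩ T := ⟨hmin, hx⟩
          rw [h] at this; exact this
        -- LHS via head-peel
        have lhs : ((List.range (n+1)).map (fun i => minset le (rem le S i) ∩ T)).filter
            (fun X => X ≠ ∅) =
            ((List.range n).map (fun i => minset le (rem le S' i) ∩ T)).filter (fun X => X ≠ ∅) := by
          rw [List.range_succ_eq_map, List.map_cons]
          have : (fun i => minset le (rem le S i) ∩ T) ∘ Nat.succ =
              fun i => minset le (rem le S' i) ∩ T := by
            funext i
            show minset le (rem le S (i+1)) ∩ T = _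
            rw [rem_shift]
          rw [List.map_map, this]
          show ((minset le (rem le S 0) ∩ T) :: _).filter _ = _
          have h0 : minset le (rem le S 0) ∩ T = ∅ := h
          simp [List.filter_cons, h0]
        -- RHS: last entry empty since rem le T n = ∅
        have hTn : rem le T n = ∅ := by
          have := rem_mono_set (le := le) hTS' n
          rw [hS'n] at this
          exact Set.subset_empty_iff.mp this
        have rhs : ((List.range (n+1)).map (fun i => minset le (rem le T i))).filter
            (fun X => X ≠ ∅) =
            ((List.range n).map (fun i => minset le (rem le T i))).filter (fun X => X ≠ ∅) := by
          rw [List.range_succ, List.map_append, List.filter_append]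
          have : minset le (rem le T n) = ∅ := by rw [hTn, minset_empty]
          simp [this]
        rw [lhs, rhs]
        exact ih S' T (tpo_mono hle hS'sub) hTS' hS'n
      · -- head nonempty: minset le S ∩ T = minset le T
        obtain ⟨t0, ht0⟩ := Set.nonempty_iff_ne_empty.mpr h
        have hmeq : minset le S ∩ T = minset le T := by
          ext c
          constructor
          · rintro ⟨hcm, hcT⟩
            exact ⟨hcT, fun d hd => hcm.2 d (hTS hd)⟩
          · rintro ⟨hcT, hcmin⟩
            refine ⟨⟨hTS hcT, fun d hd => ?_⟩, hcT⟩
            exact hle.1 c (hTS hcT) t0 (hTS ht0.2) d hd (hcmin t0 ht0.2) (ht0.1.2 d hd)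
        set T' : Set (V × V) := T \ minset le T with hT'
        have hT'S' : T' ⊆ S' := by
          intro x hx
          refine ⟨hTS hx.1, fun hmin => hx.2 ?_⟩
          rw [← hmeq]; exact ⟨hmin, hx.1⟩
        -- entries of LHS tail: ∩ T = ∩ T'
        have tail_eq : ∀ i, minset le (rem le S' i) ∩ T = minset le (rem le S' i) ∩ T' := by
          intro i
          ext x
          simp only [Set.mem_inter_iff, hT', Set.mem_diff]
          constructor
          · rintro ⟨hx1, hx2⟩
            refine ⟨hx1, hx2, fun hmin => ?_⟩
            have hxS' : x ∈ S' := (rem_subset le S' i).trans' (minset_subset le _) hx1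
            exact hxS'.2 (by rw [← hmeq] at hmin; exact hmin.1)
          · rintro ⟨hx1, hx2, _⟩
            exact ⟨hx1, hx2⟩
        have lhs : ((List.range (n+1)).map (fun i => minset le (rem le S i) ∩ T)).filter
            (fun X => X ≠ ∅) =
            minset le T ::
            ((List.range n).map (fun i => minset le (rem le S' i) ∩ T')).filter (fun X => X ≠ ∅) := by
          rw [List.range_succ_eq_map, List.map_cons]
          have hcomp : (fun i => minset le (rem le S i) ∩ T) ∘ Nat.succ =
              fun i => minset le (rem le S' i) ∩ T' := by
            funext i
            show minset le (rem le S (i+1)) ∩ T = _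
            rw [rem_shift, ← tail_eq]
          rw [List.map_map, hcomp]
          show ((minset le (rem le S 0) ∩ T) :: _).filter _ = _
          have h0 : minset le (rem le S 0) ∩ T = minset le T := hmeq
          rw [h0]
          have hTne : minset le T ≠ ∅ := by rw [← hmeq]; exact h
          simp [List.filter_cons, hTne]
        have rhs : ((List.range (n+1)).map (fun i => minset le (rem le T i))).filter
            (fun X => X ≠ ∅) =
            minset le T ::
            ((List.range n).map (fun i => minset le (rem le T' i))).filter (fun X => X ≠ ∅) := by
          rw [List.range_succ_eq_map, List.map_cons]
          have hcomp : (fun i => minset le (rem le T i)) ∘ Nat.succ =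
              fun i => minset le (rem le T' i) := by
            funext i
            show minset le (rem le T (i+1)) = _
            rw [rem_shift]
          rw [List.map_map, hcomp]
          show ((minset le (rem le T 0)) :: _).filter _ = _
          have hTne : minset le (rem le T 0) ≠ ∅ := by
            show minset le T ≠ ∅
            rw [← hmeq]; exact h
          simp [List.filter_cons, hTne]
          rfl
        rw [lhs, rhs]
        congr 1
        exact ih S' T' (tpo_mono hle hS'sub) hT'S' hS'n

/-! ### Agreement lemmas -/

lemma minset_congr {le le' : V × V → V × V → Prop} {T U : Set (V × V)}
    (hagree : ∀ c ∈ T, ∀ d ∈ T, (le c d ↔ le' c d)) (hU : U ⊆ T) :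
    minset le U = minset le' U := by
  ext c
  simp only [minset, Set.mem_setOf_eq]
  constructor
  · rintro ⟨hc, hmin⟩
    exact ⟨hc, fun d hd => (hagree c (hU hc) d (hU hd)).mp (hmin d hd)⟩
  · rintro ⟨hc, hmin⟩
    exact ⟨hc, fun d hd => (hagree c (hU hc) d (hU hd)).mpr (hmin d hd)⟩

lemma rem_congr {le le' : V × V → V × V → Prop} {T : Set (V × V)}
    (hagree : ∀ c ∈ T, ∀ d ∈ T, (le c d ↔ le' c d)) (n : ℕ) :
    rem le T n = rem le' T n := by
  induction n with
  | zero => rfl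
  | succ n ih =>
      show rem le T n \ minset le (rem le T n) = rem le' T n \ minset le' (rem le' T n)
      rw [← ih, minset_congr hagree (rem_subset le T n)]

end StmtAux

theorem stmt17 {V : Type*} [Fintype V] (l : List V) (hl : l.Nodup)
    (w : Set (V × V)) (hw : IsSPO w)
    (le le' : V × V → V × V → Prop)
    (hle : IsTotalPreorderOn le (dirSet l)) (hle' : IsTotalPreorderOn le' (dirSet l))
    (hagree : ∀ c ∈ cyc l w, ∀ d ∈ cyc l w, (le c d ↔ le' c d)) :
    addStar le l w = addStar le' l w := by
  set S := dirSet l with hS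
  set T := cyc l w with hT
  have hTS : T ⊆ S := fun p hp => hp.1
  have hfin : S.Finite := Set.toFinite S
  set N := S.ncard with hNdef
  have hN : rem le S N = ∅ := rem_eventually_empty hle hfin
  have hN' : rem le' S N = ∅ := rem_eventually_empty hle' hfin
  have hfilter :
      ((List.range N).map (fun i => minset le (rem le S i) ∩ T)).filter (fun X => X ≠ ∅) =
      ((List.range N).map (fun i => minset le' (rem le' S i) ∩ T)).filter (fun X => X ≠ ∅) := by
    rw [level_filter_eq le N S T hle hTS hN, level_filter_eq le' N S T hle' hTS hN']
    have : (fun i => minset le (rem le T i)) = fun i => minset le' (rem le' T i) := by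
      funext i
      rw [rem_congr hagree i, minset_congr hagree (rem_subset le' T i)]
    rw [this]
  have key : addSeq le l w N = addSeq le' l w N := by
    rw [addSeq_eq_foldl, addSeq_eq_foldl,
        foldl_filter _ (my_tc_idem _), hfilter, ← foldl_filter _ (my_tc_idem _)]
  have stab : ∀ (le0 : V × V → V × V → Prop), rem le0 S N = ∅ →
      ∀ k, addSeq le0 l w (N + k) = addSeq le0 l w N := by
    intro le0 h0 k
    induction k with
    | zero => rfl
    | succ k ih =>
        have hrem : rem le0 S (N + k) = ∅ := by
          have := rem_antitone le0 S (Nat.le_add_right N k)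
          rw [h0] at this
          exact Set.subset_empty_iff.mp this
        have hX : minset le0 (rem le0 S (N + k)) ∩ T = ∅ := by
          rw [hrem, minset_empty, Set.empty_inter]
        show addSeq le0 l w ((N + k) + 1) = _
        rw [addSeq_succ, ← hS, hX, stp_empty (addSeq_closed le0 l w (N + k)), ih]
  have hstar : ∀ (le0 : V × V → V × V → Prop), rem le0 S N = ∅ →
      addStar le0 l w = addSeq le0 l w N := by
    intro le0 h0
    apply subset_antisymm
    · apply Set.iUnion_subset
      intro i
      rcases le_or_gt i N with h | h
      · exact addSeq_mono_s17 le0 l w h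
      · obtain ⟨k, rfl⟩ := Nat.exists_eq_add_of_le h.le
        rw [stab le0 h0 k]
    · exact Set.subset_iUnion _ N
  rw [hstar le hN, hstar le' hN', key]
end
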